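/- arXiv:2109.01154 — 6 statements merged into one kernel-verified Lean document; each statement's English description precedes it below -/
import Mathlib

section
/- Let Δ_a, Δ_b be simplicial complexes with subcomplexes Γ_a ⊆ Δ_a and Γ_b ⊆ Δ_b, such that the relative complexes (Δ_a, Γ_a) and (Δ_b, Γ_b) are partitionable and no facet of one relative complex is properly contained in a facet of the other. Let Σ := (Γ_a \ Δ_b) ∪ (Γ_b \ Δ_a) ∪ (Γ_a ∩ Γ_b). If Γ_a ∪ Γ_b ⊇ Δ_a ∩ Δ_b and Σ is a subcomplex of Δ_a ∪ Δ_b, then the relative complex (Δ_a ∪ Δ_b, Σ) is partitionable. -/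
open Finset

variable {V : Type*}

/-- A (finite abstract) simplicial complex: a family of finite sets closed under subsets. -/
def IsComplex (Δ : Finset (Finset V)) : Prop :=
  ∀ σ ∈ Δ, ∀ τ ⊆ σ, τ ∈ Δ

/-- A facet of the relative complex `(Δ, Γ)`: a maximal face of `Δ \ Γ`. -/
def IsFacet [DecidableEq V] (Δ Γ : Finset (Finset V)) (σ : Finset V) : Prop :=
  σ ∈ Δ \ Γ ∧ ∀ τ ∈ Δ \ Γ, σ ⊆ τ → σ = τ

/-- The relative complex `(Δ, Γ)` is partitionable: its faces `Δ \ Γ` decompose as a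
disjoint union of intervals `[R σ, σ]` topped by facets `σ`. -/
def IsPartitionable [DecidableEq V] (Δ Γ : Finset (Finset V)) : Prop :=
  ∃ (F : Finset (Finset V)) (R : Finset V → Finset V),
    (∀ σ ∈ F, IsFacet Δ Γ σ) ∧
    (∀ σ ∈ F, R σ ⊆ σ) ∧
    (∀ σ ∈ F, ∀ ρ : Finset V, R σ ⊆ ρ → ρ ⊆ σ → ρ ∈ Δ \ Γ) ∧
    (∀ ρ ∈ Δ \ Γ, ∃! σ : Finset V, σ ∈ F ∧ R σ ⊆ ρ ∧ ρ ⊆ σ)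

/-- **Gluing Lemma.** -/
theorem gluing_lemma [DecidableEq V] (Δa Γa Δb Γb : Finset (Finset V))
    (hΔa : IsComplex Δa) (hΔb : IsComplex Δb)
    (hΓa : IsComplex Γa) (hΓb : IsComplex Γb)
    (hΓaΔa : Γa ⊆ Δa) (hΓbΔb : Γb ⊆ Δb)
    (hpa : IsPartitionable Δa Γa) (hpb : IsPartitionable Δb Γb)
    (hfacets : ∀ σ τ : Finset V, IsFacet Δa Γa σ → IsFacet Δb Γb τ → ¬σ ⊂ τ ∧ ¬τ ⊂ σ)
    (hG1 : Δa ∩ Δb ⊆ Γa ∪ Γb)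
    (hG2 : IsComplex ((Γa \ Δb) ∪ (Γb \ Δa) ∪ (Γa ∩ Γb)) ∧
      (Γa \ Δb) ∪ (Γb \ Δa) ∪ (Γa ∩ Γb) ⊆ Δa ∪ Δb) :
    IsPartitionable (Δa ∪ Δb) ((Γa \ Δb) ∪ (Γb \ Δa) ∪ (Γa ∩ Γb)) := by
  classical
  obtain ⟨Fa, Ra, hFa, hRa, hIa, hUa⟩ := hpa
  obtain ⟨Fb, Rb, hFb, hRb, hIb, hUb⟩ := hpb
  have disj : ∀ ρ : Finset V, ρ ∈ Δa \ Γa → ρ ∉ Δb \ Γb := by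
    intro ρ h1 h2
    simp only [Finset.mem_sdiff] at h1 h2
    have := hG1 (Finset.mem_inter.mpr ⟨h1.1, h2.1⟩)
    rw [Finset.mem_union] at this
    tauto
  have faceEq : ∀ ρ : Finset V,
      ρ ∈ (Δa ∪ Δb) \ ((Γa \ Δb) ∪ (Γb \ Δa) ∪ (Γa ∩ Γb)) ↔
        ρ ∈ Δa \ Γa ∨ ρ ∈ Δb \ Γb := by
    intro ρ
    have hsub : ρ ∈ Δa ∩ Δb → ρ ∈ Γa ∪ Γb := fun h => hG1 h
    simp only [Finset.mem_sdiff, Finset.mem_union, Finset.mem_inter] at *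
    tauto
  refine ⟨Fa ∪ Fb, fun σ => if σ ∈ Fa then Ra σ else Rb σ, ?_, ?_, ?_, ?_⟩
  · intro σ hσ
    rw [Finset.mem_union] at hσ
    rcases hσ with hσ | hσ
    · refine ⟨(faceEq σ).mpr (Or.inl (hFa σ hσ).1), ?_⟩
      intro τ hτ hst
      rcases (faceEq τ).mp hτ with hτ' | hτ'
      · exact (hFa σ hσ).2 τ hτ' hst
      · obtain ⟨σ', ⟨hσ'F, _, hτσ'⟩, _⟩ := hUb τ hτ'
        have hss : σ ⊆ σ' := hst.trans hτσ'
        have hne := (hfacets σ σ' (hFa σ hσ) (hFb σ' hσ'F)).1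
        have heq : σ = σ' := by
          by_contra h
          exact hne (Finset.ssubset_iff_subset_ne.mpr ⟨hss, h⟩)
        exact (disj σ' (heq ▸ (hFa σ hσ).1) (hFb σ' hσ'F).1).elim
    · refine ⟨(faceEq σ).mpr (Or.inr (hFb σ hσ).1), ?_⟩
      intro τ hτ hst
      rcases (faceEq τ).mp hτ with hτ' | hτ'
      · obtain ⟨σ', ⟨hσ'F, _, hτσ'⟩, _⟩ := hUa τ hτ'
        have hss : σ ⊆ σ' := hst.trans hτσ'
        have hne := (hfacets σ' σ (hFa σ' hσ'F) (hFb σ hσ)).2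
        have heq : σ = σ' := by
          by_contra h
          exact hne (Finset.ssubset_iff_subset_ne.mpr ⟨hss, h⟩)
        exact (disj σ' (hFa σ' hσ'F).1 (heq ▸ (hFb σ hσ).1)).elim
      · exact (hFb σ hσ).2 τ hτ' hst
  · intro σ hσ
    rw [Finset.mem_union] at hσ
    by_cases h : σ ∈ Fa
    · simpa [h] using hRa σ h
    · have hb : σ ∈ Fb := hσ.resolve_left h
      simpa [h] using hRb σ hb
  · intro σ hσ ρ h1 h2
    rw [Finset.mem_union] at hσ
    by_cases h : σ ∈ Fa
    · simp only [if_pos h] at h1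
      exact (faceEq ρ).mpr (Or.inl (hIa σ h ρ h1 h2))
    · have hb : σ ∈ Fb := hσ.resolve_left h
      simp only [if_neg h] at h1
      exact (faceEq ρ).mpr (Or.inr (hIb σ hb ρ h1 h2))
  · intro ρ hρ
    rcases (faceEq ρ).mp hρ with hρ' | hρ'
    · obtain ⟨σ, ⟨hσF, hR, hρσ⟩, huniq⟩ := hUa ρ hρ'
      refine ⟨σ, ⟨Finset.mem_union_left _ hσF, ?_, hρσ⟩, ?_⟩
      · simp only [if_pos hσF]; exact hR
      · rintro σ'' ⟨hσ''F, hR'', hρσ''⟩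
        by_cases h : σ'' ∈ Fa
        · simp only [if_pos h] at hR''
          exact huniq σ'' ⟨h, hR'', hρσ''⟩
        · rw [Finset.mem_union] at hσ''F
          have hb : σ'' ∈ Fb := hσ''F.resolve_left h
          simp only [if_neg h] at hR''
          exact (disj ρ hρ' (hIb σ'' hb ρ hR'' hρσ'')).elim
    · obtain ⟨σ, ⟨hσF, hR, hρσ⟩, huniq⟩ := hUb ρ hρ'
      have hna : σ ∉ Fa := fun h => disj σ (hFa σ h).1 (hFb σ hσF).1
      refine ⟨σ, ⟨Finset.mem_union_right _ hσF, ?_, hρσ⟩, ?_⟩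
      · simp only [if_neg hna]; exact hR
      · rintro σ'' ⟨hσ''F, hR'', hρσ''⟩
        by_cases h : σ'' ∈ Fa
        · simp only [if_pos h] at hR''
          exact (disj ρ (hIa σ'' h ρ hR'' hρσ'') hρ').elim
        · rw [Finset.mem_union] at hσ''F
          have hb : σ'' ∈ Fb := hσ''F.resolve_left h
          simp only [if_neg h] at hR''
          exact huniq σ'' ⟨hb, hR'', hρσ''⟩
end

section
/- If (Δ_a, Γ_a), (Δ_b, Γ_b), and the glued complex Φ = (Δ_a ∪ Δ_b, Σ) from the Gluing Lemma are all pure of the same dimension, then h(Φ) = h(Δ_a, Γ_a) + h(Δ_b, Γ_b) (entrywise sum of h-vectors). -/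
open Finset

variable {V : Type*}

/-- `fcount Δ Γ i` is the number of faces of `(Δ, Γ)` of cardinality `i`
(i.e. the `f`-vector entry `f_{i-1}`). -/
def fcount [DecidableEq V] (Δ Γ : Finset (Finset V)) (i : ℕ) : ℕ :=
  ((Δ \ Γ).filter (fun σ => σ.card = i)).card

/-- `h : ℕ → ℤ` is the `h`-vector of the `(d-1)`-dimensional relative complex `(Δ, Γ)`,
via the polynomial identity `∑ f_{i-1} (t-1)^{d-i} = ∑ h_i t^{d-i}`. -/
def IsHVector [DecidableEq V] (Δ Γ : Finset (Finset V)) (d : ℕ) (h : ℕ → ℤ) : Prop :=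
  ∑ i ∈ Finset.range (d + 1), Polynomial.C ((fcount Δ Γ i : ℤ)) * (Polynomial.X - 1) ^ (d - i)
    = ∑ i ∈ Finset.range (d + 1), Polynomial.C (h i) * (Polynomial.X : Polynomial ℤ) ^ (d - i)

/-- If the pieces and the glued complex of the Gluing Lemma are pure of the same
dimension `d - 1`, then `h(Φ) = h(Φa) + h(Φb)` entrywise. -/
theorem gluing_h_vectors [DecidableEq V] (Δa Γa Δb Γb : Finset (Finset V)) (d : ℕ)
    (hΔa : IsComplex Δa) (hΔb : IsComplex Δb)
    (hΓa : IsComplex Γa) (hΓb : IsComplex Γb)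
    (hΓaΔa : Γa ⊆ Δa) (hΓbΔb : Γb ⊆ Δb)
    (hpa : IsPartitionable Δa Γa) (hpb : IsPartitionable Δb Γb)
    (hfacets : ∀ σ τ : Finset V, IsFacet Δa Γa σ → IsFacet Δb Γb τ → ¬σ ⊂ τ ∧ ¬τ ⊂ σ)
    (hG1 : Δa ∩ Δb ⊆ Γa ∪ Γb)
    (hG2 : IsComplex ((Γa \ Δb) ∪ (Γb \ Δa) ∪ (Γa ∩ Γb)) ∧
      (Γa \ Δb) ∪ (Γb \ Δa) ∪ (Γa ∩ Γb) ⊆ Δa ∪ Δb)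
    (hpurea : ∀ σ, IsFacet Δa Γa σ → σ.card = d)
    (hpureb : ∀ σ, IsFacet Δb Γb σ → σ.card = d)
    (hpure : ∀ σ, IsFacet (Δa ∪ Δb) ((Γa \ Δb) ∪ (Γb \ Δa) ∪ (Γa ∩ Γb)) σ → σ.card = d)
    (ha hb h : ℕ → ℤ)
    (hha : IsHVector Δa Γa d ha) (hhb : IsHVector Δb Γb d hb)
    (hh : IsHVector (Δa ∪ Δb) ((Γa \ Δb) ∪ (Γb \ Δa) ∪ (Γa ∩ Γb)) d h) :
    ∀ i ≤ d, h i = ha i + hb i := by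
  -- Set identity: faces of glued complex = disjoint union of faces of the pieces
  have hset : (Δa ∪ Δb) \ ((Γa \ Δb) ∪ (Γb \ Δa) ∪ (Γa ∩ Γb)) = (Δa \ Γa) ∪ (Δb \ Γb) := by
    ext ρ
    have hg : ρ ∈ Δa → ρ ∈ Δb → (ρ ∈ Γa ∨ ρ ∈ Γb) := fun h1 h2 => by
      simpa using hG1 (Finset.mem_inter.mpr ⟨h1, h2⟩)
    simp only [Finset.mem_sdiff, Finset.mem_union, Finset.mem_inter]
    tauto
  have hdisj : Disjoint (Δa \ Γa) (Δb \ Γb) := by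
    rw [Finset.disjoint_left]
    intro ρ h1 h2
    rw [Finset.mem_sdiff] at h1 h2
    have := hG1 (Finset.mem_inter.mpr ⟨h1.1, h2.1⟩)
    rw [Finset.mem_union] at this
    tauto
  have hF : ∀ j, fcount (Δa ∪ Δb) ((Γa \ Δb) ∪ (Γb \ Δa) ∪ (Γa ∩ Γb)) j
      = fcount Δa Γa j + fcount Δb Γb j := by
    intro j
    unfold fcount
    rw [hset, Finset.filter_union, Finset.card_union_of_disjoint
      (Finset.disjoint_filter_filter hdisj)]
  -- Polynomial identity: h-polynomials add
  unfold IsHVector at hha hhb hh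
  have key : (∑ i ∈ Finset.range (d + 1), Polynomial.C (h i) * (Polynomial.X : Polynomial ℤ) ^ (d - i))
      = ∑ i ∈ Finset.range (d + 1), Polynomial.C (ha i + hb i) * (Polynomial.X : Polynomial ℤ) ^ (d - i) := by
    rw [← hh]
    have : ∀ i ∈ Finset.range (d + 1),
        Polynomial.C ((fcount (Δa ∪ Δb) ((Γa \ Δb) ∪ (Γb \ Δa) ∪ (Γa ∩ Γb)) i : ℤ)) * (Polynomial.X - 1) ^ (d - i)
        = Polynomial.C ((fcount Δa Γa i : ℤ)) * (Polynomial.X - 1) ^ (d - i)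
          + Polynomial.C ((fcount Δb Γb i : ℤ)) * (Polynomial.X - 1) ^ (d - i) := by
      intro i _
      rw [hF i]
      push_cast
      rw [Polynomial.C_add, add_mul]
    rw [Finset.sum_congr rfl this, Finset.sum_add_distrib, hha, hhb, ← Finset.sum_add_distrib]
    congr 1
    ext i
    rw [← add_mul, ← Polynomial.C_add]
  intro i hi
  have := congrArg (fun p => Polynomial.coeff p (d - i)) key
  simp only [Polynomial.finset_sum_coeff, Polynomial.coeff_C_mul, Polynomial.coeff_X_pow] at this
  have heq : ∀ c : ℕ → ℤ, ∑ j ∈ Finset.range (d + 1), c j * (if d - i = d - j then (1:ℤ) else 0) = c i := by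
    intro c
    rw [Finset.sum_eq_single i]
    · simp
    · intro j hj hji
      rw [Finset.mem_range] at hj
      have : ¬ (d - i = d - j) := fun hdji => hji (by omega)
      simp [this]
    · intro hmem
      exact absurd (Finset.mem_range.mpr (by omega)) hmem
  rw [heq, heq] at this
  exact this
end

section
/- Let Γ_b be a subcomplex of Δ_b, and suppose Φ_a = (Δ_a, Γ_a) and Φ_b = (Δ_b, (Δ_a ∩ Δ_b) ∪ Γ_b) are partitionable relative complexes such that no facet of one is properly contained in a facet of the other. If Δ_a ∩ Γ_b ⊆ Γ_a, then the relative complex (Δ_a ∪ Δ_b, Γ_a ∪ Γ_b) is partitionable. -/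
open Finset

variable {V : Type*}

/-- **Shelling-like Gluing Lemma** (partitionability part). -/
theorem shelling_like_gluing [DecidableEq V] (Δa Γa Δb Γb : Finset (Finset V))
    (hΔa : IsComplex Δa) (hΔb : IsComplex Δb)
    (hΓa : IsComplex Γa) (hΓb : IsComplex Γb)
    (hΓaΔa : Γa ⊆ Δa) (hΓbΔb : Γb ⊆ Δb)
    (hpa : IsPartitionable Δa Γa)
    (hpb : IsPartitionable Δb ((Δa ∩ Δb) ∪ Γb))
    (hfacets : ∀ σ τ : Finset V, IsFacet Δa Γa σ → IsFacet Δb ((Δa ∩ Δb) ∪ Γb) τ →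
      ¬σ ⊂ τ ∧ ¬τ ⊂ σ)
    (hsub : Δa ∩ Γb ⊆ Γa) :
    IsPartitionable (Δa ∪ Δb) (Γa ∪ Γb) := by
  obtain ⟨Fa, Ra, hFa, hRa, hIa, hUa⟩ := hpa
  obtain ⟨Fb, Rb, hFb, hRb, hIb, hUb⟩ := hpb
  -- faces of the glued complex split into the two pieces
  have hfaceA : ∀ ρ, ρ ∈ Δa \ Γa → ρ ∈ (Δa ∪ Δb) \ (Γa ∪ Γb) := by
    intro ρ hρ
    simp only [mem_sdiff, mem_union] at hρ ⊢
    refine ⟨Or.inl hρ.1, ?_⟩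
    rintro (h | h)
    · exact hρ.2 h
    · exact hρ.2 (hsub (mem_inter.mpr ⟨hρ.1, h⟩))
  have hBnotA : ∀ ρ, ρ ∈ Δb \ ((Δa ∩ Δb) ∪ Γb) → ρ ∉ Δa := by
    intro ρ hρ hA
    rw [mem_sdiff] at hρ
    exact hρ.2 (mem_union_left _ (mem_inter.mpr ⟨hA, hρ.1⟩))
  have hfaceB : ∀ ρ, ρ ∈ Δb \ ((Δa ∩ Δb) ∪ Γb) → ρ ∈ (Δa ∪ Δb) \ (Γa ∪ Γb) := by
    intro ρ hρ
    have hnA := hBnotA ρ hρ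
    rw [mem_sdiff] at hρ ⊢
    refine ⟨mem_union_right _ hρ.1, ?_⟩
    rw [mem_union]
    rintro (h | h)
    · exact hnA (hΓaΔa h)
    · exact hρ.2 (mem_union_right _ h)
  have hsplit : ∀ ρ, ρ ∈ (Δa ∪ Δb) \ (Γa ∪ Γb) →
      ρ ∈ Δa \ Γa ∨ ρ ∈ Δb \ ((Δa ∩ Δb) ∪ Γb) := by
    intro ρ hρ
    rw [mem_sdiff, mem_union, mem_union] at hρ
    push_neg at hρ
    by_cases hA : ρ ∈ Δa
    · exact Or.inl (mem_sdiff.mpr ⟨hA, hρ.2.1⟩)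
    · refine Or.inr (mem_sdiff.mpr ⟨hρ.1.resolve_left hA, ?_⟩)
      rw [mem_union, mem_inter]
      rintro (⟨h, _⟩ | h)
      · exact hA h
      · exact hρ.2.2 h
  -- Fa and Fb are disjoint
  have hAinΔa : ∀ σ ∈ Fa, σ ∈ Δa := fun σ hσ => (mem_sdiff.mp (hFa σ hσ).1).1
  have hBnotΔa : ∀ σ ∈ Fb, σ ∉ Δa := fun σ hσ => hBnotA σ (hFb σ hσ).1
  refine ⟨Fa ∪ Fb, fun σ => if σ ∈ Fa then Ra σ else Rb σ, ?_, ?_, ?_, ?_⟩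
  · -- facets
    intro σ hσ
    rcases mem_union.mp hσ with hσa | hσb
    · refine ⟨hfaceA σ (hFa σ hσa).1, ?_⟩
      intro τ hτ hστ
      rcases hsplit τ hτ with hτa | hτb
      · exact (hFa σ hσa).2 τ hτa hστ
      · -- τ is a face of Φb; extend to a facet of Φb and contradict hfacets
        obtain ⟨σ', ⟨hσ'F, _, hτσ'⟩, _⟩ := hUb τ hτb
        have h1 : σ ⊆ σ' := hστ.trans hτσ'
        have h2 := (hfacets σ σ' (hFa σ hσa) (hFb σ' hσ'F)).1
        have : σ = σ' := by
          by_contra hne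
          exact h2 (ssubset_of_subset_of_ne h1 hne)
        exact absurd (hAinΔa σ hσa) (this ▸ hBnotΔa σ' hσ'F)
    · refine ⟨hfaceB σ (hFb σ hσb).1, ?_⟩
      intro τ hτ hστ
      rcases hsplit τ hτ with hτa | hτb
      · obtain ⟨σ', ⟨hσ'F, _, hτσ'⟩, _⟩ := hUa τ hτa
        have h1 : σ ⊆ σ' := hστ.trans hτσ'
        have h2 := (hfacets σ' σ (hFa σ' hσ'F) (hFb σ hσb)).2
        have : σ = σ' := by
          by_contra hne
          exact h2 (ssubset_of_subset_of_ne h1 hne)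
        exact absurd (this ▸ hAinΔa σ' hσ'F) (hBnotΔa σ hσb)
      · exact (hFb σ hσb).2 τ hτb hστ
  · -- R σ ⊆ σ
    intro σ hσ
    by_cases h : σ ∈ Fa
    · simpa [h] using hRa σ h
    · have hσb := (mem_union.mp hσ).resolve_left h
      simpa [h] using hRb σ hσb
  · -- intervals land in the faces
    intro σ hσ ρ h1 h2
    by_cases h : σ ∈ Fa
    · simp only [if_pos h] at h1
      exact hfaceA ρ (hIa σ h ρ h1 h2)
    · have hσb := (mem_union.mp hσ).resolve_left h
      simp only [if_neg h] at h1
      exact hfaceB ρ (hIb σ hσb ρ h1 h2)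
  · -- unique cover
    intro ρ hρ
    rcases hsplit ρ hρ with hρa | hρb
    · obtain ⟨σ, ⟨hσF, hRσ, hρσ⟩, huniq⟩ := hUa ρ hρa
      refine ⟨σ, ⟨mem_union_left _ hσF, by simpa [hσF] using hRσ, hρσ⟩, ?_⟩
      rintro σ' ⟨hσ'F, hRσ', hρσ'⟩
      rcases mem_union.mp hσ'F with h | h
      · simp only [if_pos h] at hRσ'
        exact huniq σ' ⟨h, hRσ', hρσ'⟩
      · have hnA : σ' ∉ Fa := fun hc => hBnotΔa σ' h (hAinΔa σ' hc)
        simp only [if_neg hnA] at hRσ'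
        have := hIb σ' h ρ hRσ' hρσ'
        exact absurd (mem_sdiff.mp hρa).1 (hBnotA ρ this)
    · obtain ⟨σ, ⟨hσF, hRσ, hρσ⟩, huniq⟩ := hUb ρ hρb
      have hnA : σ ∉ Fa := fun hc => hBnotΔa σ hσF (hAinΔa σ hc)
      refine ⟨σ, ⟨mem_union_right _ hσF, by simpa [hnA] using hRσ, hρσ⟩, ?_⟩
      rintro σ' ⟨hσ'F, hRσ', hρσ'⟩
      rcases mem_union.mp hσ'F with h | h
      · simp only [if_pos h] at hRσ'
        have := hIa σ' h ρ hRσ' hρσ'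
        exact absurd (mem_sdiff.mp this).1 (hBnotA ρ hρb)
      · have hnA' : σ' ∉ Fa := fun hc => hBnotΔa σ' h (hAinΔa σ' hc)
        simp only [if_neg hnA'] at hRσ'
        exact huniq σ' ⟨h, hRσ', hρσ'⟩
end

section
/- Let (Δ, Γ) be a relative simplicial complex and φ: Δ → Δ' a surjective dimension-preserving simplicial map that induces a bijection from the faces of (Δ, Γ) onto the faces of (Δ', Γ') for some subcomplex Γ' ⊆ Δ', and that sends facets of (Δ, Γ) to facets of (Δ', Γ'). If (Δ, Γ) is partitionable, then (Δ', Γ') is partitionable. -/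
open Finset

variable {V : Type*}

/-- **Folding Lemma.** A folding map preserves partitionability. -/
theorem folding_lemma {W : Type*} [DecidableEq V] [DecidableEq W]
    (Δ Γ : Finset (Finset V)) (Δ' Γ' : Finset (Finset W)) (φ : V → W)
    (hΔ : IsComplex Δ) (hΓ : IsComplex Γ) (hΓΔ : Γ ⊆ Δ)
    (hΔ' : IsComplex Δ') (hΓ' : IsComplex Γ') (hΓΔ' : Γ' ⊆ Δ')
    (hsimp : ∀ σ ∈ Δ, σ.image φ ∈ Δ')
    (hsurj : ∀ τ ∈ Δ', ∃ σ ∈ Δ, σ.image φ = τ)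
    (hdim : ∀ σ ∈ Δ \ Γ, (σ.image φ).card = σ.card)
    (hbij : Set.BijOn (fun σ : Finset V => σ.image φ) ↑(Δ \ Γ) ↑(Δ' \ Γ'))
    (hfacets : ∀ σ, IsFacet Δ Γ σ → IsFacet Δ' Γ' (σ.image φ))
    (hpart : IsPartitionable Δ Γ) :
    IsPartitionable Δ' Γ' := by

  classical
  obtain ⟨F, R, hF, hR, hint, huniq⟩ := hpart
  set e : Finset V → Finset W := fun σ => σ.image φ with he
  -- injectivity of e on F
  have injF : ∀ σ ∈ F, ∀ τ ∈ F, e σ = e τ → σ = τ := by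
    intro σ hσ τ hτ h
    exact hbij.injOn (by exact_mod_cast (hF σ hσ).1) (by exact_mod_cast (hF τ hτ).1) h
  -- pullback construction
  have key : ∀ σ ∈ F, ∀ ρ' : Finset W, e (R σ) ⊆ ρ' → ρ' ⊆ e σ →
      ∃ ρ₀ : Finset V, ρ₀ ∈ Δ \ Γ ∧ R σ ⊆ ρ₀ ∧ ρ₀ ⊆ σ ∧ e ρ₀ = ρ' := by
    intro σ hσ ρ' h1 h2
    refine ⟨σ.filter (fun x => φ x ∈ ρ'), ?_, ?_, filter_subset _ _, ?_⟩
    · exact hint σ hσ _ (fun x hx => mem_filter.2 ⟨hR σ hσ hx, h1 (mem_image_of_mem φ hx)⟩)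
        (filter_subset _ _)
    · intro x hx
      exact mem_filter.2 ⟨hR σ hσ hx, h1 (mem_image_of_mem φ hx)⟩
    · apply subset_antisymm
      · intro y hy
        obtain ⟨x, hx, rfl⟩ := mem_image.1 hy
        exact (mem_filter.1 hx).2
      · intro y hy
        obtain ⟨x, hx, rfl⟩ := mem_image.1 (h2 hy)
        exact mem_image_of_mem φ (mem_filter.2 ⟨hx, hy⟩)
  set R' : Finset W → Finset W :=
    fun σ' => if h : ∃ σ, σ ∈ F ∧ e σ = σ' then e (R h.choose) else ∅ with hR'
  have Rval : ∀ σ ∈ F, R' (e σ) = e (R σ) := by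
    intro σ hσ
    have h : ∃ τ, τ ∈ F ∧ e τ = e σ := ⟨σ, hσ, rfl⟩
    rw [hR']
    simp only [dif_pos h]
    rw [injF _ h.choose_spec.1 σ hσ h.choose_spec.2]
  refine ⟨F.image e, R', ?_, ?_, ?_, ?_⟩
  · intro σ' hσ'
    obtain ⟨σ, hσ, rfl⟩ := mem_image.1 hσ'
    exact hfacets σ (hF σ hσ)
  · intro σ' hσ'
    obtain ⟨σ, hσ, rfl⟩ := mem_image.1 hσ'
    rw [Rval σ hσ]
    exact image_subset_image (hR σ hσ)
  · intro σ' hσ' ρ' h1 h2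
    obtain ⟨σ, hσ, rfl⟩ := mem_image.1 hσ'
    rw [Rval σ hσ] at h1
    obtain ⟨ρ₀, hρ₀, -, -, rfl⟩ := key σ hσ ρ' h1 h2
    exact_mod_cast hbij.mapsTo (by exact_mod_cast hρ₀)
  · intro ρ' hρ'
    obtain ⟨ρ, hρ, hρe⟩ := hbij.surjOn (by exact_mod_cast hρ' : ρ' ∈ (↑(Δ' \ Γ') : Set (Finset W)))
    have hρ : ρ ∈ Δ \ Γ := by exact_mod_cast hρ
    have hρe : e ρ = ρ' := hρe
    obtain ⟨σ, ⟨hσF, hσ1, hσ2⟩, hσu⟩ := huniq ρ hρ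
    refine ⟨e σ, ⟨mem_image_of_mem e hσF, ?_, ?_⟩, ?_⟩
    · rw [Rval σ hσF, ← hρe]
      exact image_subset_image hσ1
    · rw [← hρe]
      exact image_subset_image hσ2
    · rintro τ' ⟨hτ'F, hτ'1, hτ'2⟩
      obtain ⟨τ, hτF, rfl⟩ := mem_image.1 hτ'F
      rw [Rval τ hτF] at hτ'1
      obtain ⟨ρ₀, hρ₀, hr1, hr2, hr3⟩ := key τ hτF ρ' hτ'1 hτ'2
      have : ρ₀ = ρ := hbij.injOn (by exact_mod_cast hρ₀) (by exact_mod_cast hρ)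
        (by simpa [hρe] using hr3)
      subst this
      rw [hσu τ ⟨hτF, hr1, hr2⟩]
end

section
/- Let Δ be a pure 1-dimensional simplicial complex (a graph with no isolated vertices, viewed with all vertices and edges and the empty face). The relative complex (Δ, {∅}) is partitionable if and only if no connected component of Δ is a tree. -/
open Finset

variable {V : Type*}

/-- The pure 1-dimensional simplicial complex associated to a graph `G`:
the empty face, the vertices, and the edges. -/
def graphComplex [Fintype V] [DecidableEq V] (G : SimpleGraph V) [DecidableRel G.Adj] :
    Finset (Finset V) :=
  Finset.univ.filter
    (fun σ => σ.card ≤ 2 ∧ ∀ u ∈ σ, ∀ v ∈ σ, u ≠ v → G.Adj u v)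


section WalkHelpers

open SimpleGraph

variable {W : Type*} {G : SimpleGraph W}

lemma support_getElem_eq_getVert {u v : W} (p : G.Walk u v)
    {i : ℕ} (h : i < p.support.length) : p.support[i] = p.getVert i := by
  induction p generalizing i with
  | nil =>
    simp only [Walk.support_nil, List.length_singleton] at h
    interval_cases i
    simp [Walk.getVert]
  | cons ha q ih =>
    cases i with
    | zero => simp [Walk.getVert]
    | succ n =>
      simp only [Walk.support_cons, List.getElem_cons_succ, Walk.getVert_cons_succ]
      exact ih _

lemma cycle_getVert_inj {a : W} {p : G.Walk a a} (hp : p.IsCycle) {m n : ℕ}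
    (hm1 : 1 ≤ m) (hm2 : m ≤ p.length) (hn1 : 1 ≤ n) (hn2 : n ≤ p.length)
    (h : p.getVert m = p.getVert n) : m = n := by
  have hnd := hp.support_nodup
  have hlen : p.support.length = p.length + 1 := by
    simp [Walk.length_support]
  have hltm : m - 1 < p.support.tail.length := by
    simp [List.length_tail, hlen]; omega
  have hltn : n - 1 < p.support.tail.length := by
    simp [List.length_tail, hlen]; omega
  have e1 : p.support.tail[m-1] = p.getVert m := by
    rw [List.getElem_tail]
    rw [support_getElem_eq_getVert]
    congr 1; omega
  have e2 : p.support.tail[n-1] = p.getVert n := by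
    rw [List.getElem_tail]
    rw [support_getElem_eq_getVert]
    congr 1; omega
  have := (hnd.getElem_inj_iff (hi := hltm) (hj := hltn)).mp (by rw [e1, e2, h])
  omega

lemma exists_cycle_succ {a : W} (p : G.Walk a a) (hp : p.IsCycle) :
    ∃ nxt : W → W, ∀ v ∈ p.support,
      G.Adj v (nxt v) ∧ nxt v ∈ p.support ∧ nxt (nxt v) ≠ v := by
  classical
  have hlen : 3 ≤ p.length := hp.three_le_length
  have hex : ∀ v ∈ p.support, ∃ n, p.getVert n = v := by
    intro v hv
    obtain ⟨n, hn, -⟩ := Walk.mem_support_iff_exists_getVert.mp hv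
    exact ⟨n, hn⟩
  -- index function
  set idx : W → ℕ := fun v => if hv : ∃ n, p.getVert n = v then Nat.find hv else 0 with hidx
  have hspec : ∀ v ∈ p.support, p.getVert (idx v) = v := by
    intro v hv
    rw [hidx]; simp only [dif_pos (hex v hv)]
    exact Nat.find_spec (hex v hv)
  have hle : ∀ v ∈ p.support, idx v ≤ p.length := by
    intro v hv
    obtain ⟨n, hn, hn'⟩ := Walk.mem_support_iff_exists_getVert.mp hv
    rw [hidx]; simp only [dif_pos (hex v hv)]
    exact le_trans (Nat.find_min' _ hn) hn'
  have hidxa : idx a = 0 := by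
    rw [hidx]; simp only [dif_pos (hex a p.start_mem_support)]
    simp [Nat.find_eq_zero]
  have hpos : ∀ v ∈ p.support, v ≠ a → 1 ≤ idx v := by
    intro v hv hva
    rcases Nat.eq_zero_or_pos (idx v) with h0 | h1
    · exfalso; apply hva; rw [← hspec v hv, h0, Walk.getVert_zero]
    · exact h1
  have hne_a : ∀ k, 1 ≤ k → k ≤ p.length - 1 → p.getVert k ≠ a := by
    intro k hk1 hk2 hka
    have : p.getVert k = p.getVert p.length := by rw [hka, Walk.getVert_length]
    have := cycle_getVert_inj hp hk1 (by omega) (by omega) le_rfl this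
    omega
  have hlt : ∀ v ∈ p.support, idx v < p.length := by
    intro v hv
    rcases lt_or_eq_of_le (hle v hv) with h | h
    · exact h
    · exfalso
      have hva : v = a := by rw [← hspec v hv, h, Walk.getVert_length]
      have := hidxa
      rw [hva] at h; omega
  refine ⟨fun v => p.getVert (idx v + 1), ?_⟩
  intro v hv
  have hmem : p.getVert (idx v + 1) ∈ p.support := by
    rw [Walk.mem_support_iff_exists_getVert]
    exact ⟨idx v + 1, rfl, by have := hlt v hv; omega⟩
  refine ⟨?_, hmem, ?_⟩
  · have := p.adj_getVert_succ (hlt v hv)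
    rwa [hspec v hv] at this
  · -- nxt (nxt v) ≠ v
    show p.getVert (idx (p.getVert (idx v + 1)) + 1) ≠ v
    intro hcon
    have hi1 : idx v + 1 ≤ p.length := hlt v hv
    rcases lt_or_eq_of_le hi1 with hA | hB
    · -- idx v + 1 < p.length
      have hwa : p.getVert (idx v + 1) ≠ a := hne_a (idx v + 1) (by omega) (by omega)
      have hj1 : 1 ≤ idx (p.getVert (idx v + 1)) := hpos _ hmem hwa
      have hj2 : idx (p.getVert (idx v + 1)) ≤ p.length := hle _ hmem
      have hj : idx (p.getVert (idx v + 1)) = idx v + 1 :=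
        cycle_getVert_inj hp hj1 hj2 (by omega) (by omega) (hspec _ hmem)
      rw [hj] at hcon
      rcases Nat.eq_zero_or_pos (idx v) with h0 | h1
      · -- v = a
        have hva : v = a := by
          have := hspec v hv
          rw [h0, Walk.getVert_zero] at this
          exact this.symm
        rw [h0] at hcon
        exact hne_a 2 (by omega) (by omega) (by rw [hcon, hva])
      · have h2 : idx v + 1 + 1 ≤ p.length := by omega
        have := cycle_getVert_inj hp (by omega) h2 (by omega) (by omega)
          (show p.getVert (idx v + 1 + 1) = p.getVert (idx v) by rw [hcon, hspec v hv])
        omega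
    · -- idx v + 1 = p.length
      have hwa : p.getVert (idx v + 1) = a := by rw [hB, Walk.getVert_length]
      have hj : idx (p.getVert (idx v + 1)) = 0 := by rw [hwa, hidxa]
      rw [hj] at hcon
      have h1i : 1 ≤ idx v := by omega
      have : (1 : ℕ) = idx v := cycle_getVert_inj hp le_rfl (by omega) h1i (by omega)
        (by rw [hcon, hspec v hv])
      omega

lemma exists_good_fun (G : SimpleGraph W)
    (h : ∀ c : G.ConnectedComponent, ∃ (a : W) (p : G.Walk a a),
      p.IsCycle ∧ G.connectedComponentMk a = c) :
    ∃ g : W → W, (∀ v, G.Adj v (g v)) ∧ ∀ v, g (g v) ≠ v := by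
  classical
  obtain ⟨A, P, hcyc, hmk⟩ :
      ∃ (A : G.ConnectedComponent → W) (P : ∀ c, G.Walk (A c) (A c)),
        (∀ c, (P c).IsCycle) ∧ ∀ c, G.connectedComponentMk (A c) = c := by
    choose A P h1 h2 using h
    exact ⟨A, P, h1, h2⟩
  choose nxt hnxt using fun c => exists_cycle_succ (P c) (hcyc c)
  -- support vertices lie in the component
  have hsupp : ∀ (c : G.ConnectedComponent) (x : W), x ∈ (P c).support →
      G.connectedComponentMk x = c := by
    intro c x hx
    have : G.Reachable (A c) x := ((P c).takeUntil x hx).reachable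
    exact (ConnectedComponent.sound this).symm.trans (hmk c)
  -- step towards the cycle
  have hstep : ∀ v : W, v ∉ (P (G.connectedComponentMk v)).support →
      ∃ u, G.Adj v u ∧ G.dist u (A (G.connectedComponentMk v)) <
        G.dist v (A (G.connectedComponentMk v)) := by
    intro v hv
    have hva : v ≠ A (G.connectedComponentMk v) := by
      intro hva
      apply hv
      rw [hva, hmk (G.connectedComponentMk v)]
      exact (P (G.connectedComponentMk v)).start_mem_support
    have hr : G.Reachable v (A (G.connectedComponentMk v)) :=
      ConnectedComponent.exact (hmk (G.connectedComponentMk v)).symm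
    have hd0 : G.dist v (A (G.connectedComponentMk v)) ≠ 0 :=
      fun h0 => hva (hr.dist_eq_zero_iff.mp h0)
    obtain ⟨q, hq⟩ := hr.exists_walk_length_eq_dist
    have hnil : ¬ q.Nil := by
      rw [Walk.nil_iff_length_eq]; omega
    refine ⟨q.getVert 1, q.adj_snd hnil, ?_⟩
    have h1 : G.dist (q.getVert 1) (A (G.connectedComponentMk v)) ≤ q.tail.length :=
      dist_le q.tail
    have h2 : q.tail.length + 1 = q.length := Walk.length_tail_add_one hnil
    omega
  classical
  set g : W → W := fun v =>
    if hv : v ∈ (P (G.connectedComponentMk v)).support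
    then nxt (G.connectedComponentMk v) v
    else Classical.choose (hstep v hv) with hg
  have hgpos : ∀ u (hu : u ∈ (P (G.connectedComponentMk u)).support),
      g u = nxt (G.connectedComponentMk u) u := fun u hu => by rw [hg]; exact dif_pos hu
  have hgneg : ∀ u (hu : u ∉ (P (G.connectedComponentMk u)).support),
      g u = Classical.choose (hstep u hu) := fun u hu => by rw [hg]; exact dif_neg hu
  have hadj : ∀ v, G.Adj v (g v) := by
    intro v
    by_cases hv : v ∈ (P (G.connectedComponentMk v)).support
    · rw [hgpos v hv]; exact (hnxt _ v hv).1
    · rw [hgneg v hv]; exact (Classical.choose_spec (hstep v hv)).1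
  have hcompg : ∀ v, G.connectedComponentMk (g v) = G.connectedComponentMk v :=
    fun v => (ConnectedComponent.sound (hadj v).reachable).symm
  refine ⟨g, hadj, ?_⟩
  intro v hcon
  by_cases hv : v ∈ (P (G.connectedComponentMk v)).support
  · have h1 : g v = nxt (G.connectedComponentMk v) v := hgpos v hv
    have h2 : g v ∈ (P (G.connectedComponentMk v)).support := h1 ▸ (hnxt _ v hv).2.1
    have h2' : g v ∈ (P (G.connectedComponentMk (g v))).support := by
      rw [hcompg v]; exact h2
    have h3 : g (g v) = nxt (G.connectedComponentMk (g v)) (g v) := hgpos (g v) h2'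
    rw [hcompg v] at h3
    exact (hnxt _ v hv).2.2 (by rw [← h1, ← h3, hcon])
  · have h1 : g v = Classical.choose (hstep v hv) := hgneg v hv
    have hdist : G.dist (g v) (A (G.connectedComponentMk v)) <
        G.dist v (A (G.connectedComponentMk v)) := by
      rw [h1]; exact (Classical.choose_spec (hstep v hv)).2
    by_cases hu : g v ∈ (P (G.connectedComponentMk (g v))).support
    · have h3 : g (g v) = nxt (G.connectedComponentMk (g v)) (g v) := hgpos (g v) hu
      have h4 : g (g v) ∈ (P (G.connectedComponentMk (g v))).support :=
        h3 ▸ (hnxt _ _ hu).2.1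
      rw [hcon, hcompg v] at h4
      exact hv h4
    · have h3 : g (g v) = Classical.choose (hstep (g v) hu) := hgneg (g v) hu
      have hdist2 : G.dist (g (g v)) (A (G.connectedComponentMk (g v))) <
          G.dist (g v) (A (G.connectedComponentMk (g v))) := by
        rw [h3]; exact (Classical.choose_spec (hstep (g v) hu)).2
      rw [hcon, hcompg v] at hdist2
      omega

lemma induce_supp_connected' (c : G.ConnectedComponent) :
    (SimpleGraph.induce c.supp G).Connected := by
  rw [connected_iff]
  obtain ⟨v, hv⟩ := c.exists_rep
  have hv' : v ∈ c.supp := by rwa [ConnectedComponent.mem_supp_iff]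
  refine ⟨?_, ⟨⟨v, hv'⟩⟩⟩
  have key : ∀ {x y : W} (q : G.Walk x y) (hx : x ∈ c.supp) (hy : y ∈ c.supp),
      (SimpleGraph.induce c.supp G).Reachable ⟨x, hx⟩ ⟨y, hy⟩ := by
    intro x y q
    induction q with
    | nil => intro hx hy; exact Reachable.refl _
    | @cons x w y h q ih =>
      intro hx hy
      have hw : w ∈ c.supp := by
        rw [ConnectedComponent.mem_supp_iff] at hx ⊢
        exact (ConnectedComponent.sound h.reachable).symm.trans hx
      have hadj : (SimpleGraph.induce c.supp G).Adj ⟨x, hx⟩ ⟨w, hw⟩ := by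
        simpa using h
      exact hadj.reachable.trans (ih hw hy)
  rintro ⟨x, hx⟩ ⟨y, hy⟩
  rw [ConnectedComponent.mem_supp_iff] at hx hy
  obtain ⟨q⟩ := ConnectedComponent.exact (hx.trans hy.symm)
  exact key q _ _

lemma comp_cycle (c : G.ConnectedComponent)
    (h : ¬ (SimpleGraph.induce c.supp G).IsTree) :
    ∃ (a : W) (p : G.Walk a a), p.IsCycle ∧ G.connectedComponentMk a = c := by
  have hconn := induce_supp_connected' c
  have hnac : ¬ (SimpleGraph.induce c.supp G).IsAcyclic := by
    intro hac
    exact h ⟨hconn, hac⟩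
  rw [IsAcyclic] at hnac
  push_neg at hnac
  obtain ⟨x, q, hq⟩ := hnac
  refine ⟨(x : W), q.map (Embedding.induce c.supp).toHom, ?_, ?_⟩
  · exact (Walk.map_isCycle_iff_of_injective Subtype.val_injective).mpr hq
  · exact (ConnectedComponent.mem_supp_iff c (x : W)).mp x.2

end WalkHelpers

section GC

open SimpleGraph

variable [Fintype V] [DecidableEq V] (G : SimpleGraph V) [DecidableRel G.Adj]

lemma mem_graphComplex_iff {σ : Finset V} :
    σ ∈ graphComplex G ↔ σ.card ≤ 2 ∧ ∀ u ∈ σ, ∀ v ∈ σ, u ≠ v → G.Adj u v := by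
  simp [graphComplex]

lemma singleton_mem_graphComplex (v : V) : ({v} : Finset V) ∈ graphComplex G := by
  rw [mem_graphComplex_iff]
  refine ⟨by simp, ?_⟩
  intro u hu w hw hne
  simp only [mem_singleton] at hu hw
  exact absurd (hu.trans hw.symm) hne

lemma pair_mem_graphComplex {u v : V} (h : G.Adj u v) :
    ({u, v} : Finset V) ∈ graphComplex G := by
  rw [mem_graphComplex_iff]
  refine ⟨card_insert_le _ _ |>.trans (by simp), ?_⟩
  intro a ha b hb hne
  simp only [mem_insert, mem_singleton] at ha hb
  rcases ha with rfl | rfl <;> rcases hb with rfl | rfl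
  · exact absurd rfl hne
  · exact h
  · exact h.symm
  · exact absurd rfl hne

lemma graphComplex_down {σ τ : Finset V} (hσ : σ ∈ graphComplex G) (hτ : τ ⊆ σ) :
    τ ∈ graphComplex G := by
  rw [mem_graphComplex_iff] at hσ ⊢
  exact ⟨le_trans (card_le_card hτ) hσ.1,
    fun u hu w hw hne => hσ.2 u (hτ hu) w (hτ hw) hne⟩

lemma mem_sdiff_singleton_iff {ρ : Finset V} {G : SimpleGraph V} [DecidableRel G.Adj] :
    ρ ∈ graphComplex G \ {∅} ↔ ρ ∈ graphComplex G ∧ ρ ≠ ∅ := by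
  rw [mem_sdiff, mem_singleton]

lemma good_partitionable (g : V → V) (hadj : ∀ v, G.Adj v (g v))
    (hgg : ∀ v, g (g v) ≠ v) : IsPartitionable (graphComplex G) {∅} := by
  classical
  set e : V → Finset V := fun v => {v, g v} with he
  have hev : ∀ v, v ∈ e v := fun v => by simp [he]
  have hecard : ∀ v, (e v).card = 2 := fun v => card_pair (hadj v).ne
  have heΔ : ∀ v, e v ∈ graphComplex G := fun v => pair_mem_graphComplex G (hadj v)
  have einj : ∀ v w, e v = e w → v = w := by
    intro v w hvw
    by_contra hne
    have hv : v ∈ e w := hvw ▸ hev v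
    have hw : w ∈ e v := hvw ▸ hev w
    simp only [he, mem_insert, mem_singleton] at hv hw
    rcases hv with rfl | hv
    · exact hne rfl
    · rcases hw with h' | hw
      · exact hne h'.symm
      · exact hgg w (by rw [← hv, ← hw])
  set F : Finset (Finset V) := (graphComplex G).filter (fun σ => σ.card = 2) with hF
  set R : Finset V → Finset V := fun σ => if h : ∃ v, e v = σ then {h.choose} else σ
    with hR
  have hmemF : ∀ {σ}, σ ∈ F ↔ σ ∈ graphComplex G ∧ σ.card = 2 := by
    intro σ; rw [hF, mem_filter]
  have hRsub : ∀ σ, R σ ⊆ σ := by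
    intro σ
    by_cases h : ∃ v, e v = σ
    · have : R σ = {h.choose} := by simp only [hR]; rw [dif_pos h]
      rw [this, singleton_subset_iff]
      have h3 : h.choose ∈ e h.choose := hev _
      rwa [h.choose_spec] at h3
    · have : R σ = σ := by simp only [hR]; rw [dif_neg h]
      rw [this]
  have hRpos : ∀ v, R (e v) = {v} := by
    intro v
    have h : ∃ u, e u = e v := ⟨v, rfl⟩
    have : R (e v) = {h.choose} := by simp only [hR]; rw [dif_pos h]
    rw [this, einj _ _ h.choose_spec]
  have hRne : ∀ σ ∈ F, R σ ≠ ∅ := by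
    intro σ hσ
    by_cases h : ∃ v, e v = σ
    · have : R σ = {h.choose} := by simp only [hR]; rw [dif_pos h]
      rw [this]; exact singleton_ne_empty _
    · have : R σ = σ := by simp only [hR]; rw [dif_neg h]
      rw [this]
      intro hemp
      rw [hemp] at hσ
      simp [hmemF] at hσ
  refine ⟨F, R, ?_, fun σ _ => hRsub σ, ?_, ?_⟩
  · -- facets
    intro σ hσ
    rw [hmemF] at hσ
    constructor
    · rw [mem_sdiff_singleton_iff]
      refine ⟨hσ.1, ?_⟩
      intro h; rw [h] at hσ; simp at hσ
    · intro τ hτ hsub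
      rw [mem_sdiff_singleton_iff] at hτ
      have : τ.card ≤ 2 := ((mem_graphComplex_iff G).mp hτ.1).1
      exact eq_of_subset_of_card_le hsub (by omega)
  · -- intervals
    intro σ hσ ρ hRρ hρσ
    rw [hmemF] at hσ
    rw [mem_sdiff_singleton_iff]
    refine ⟨graphComplex_down G hσ.1 hρσ, ?_⟩
    intro hemp
    apply hRne σ (hmemF.mpr hσ)
    rw [← subset_empty, ← hemp]
    exact hRρ
  · -- covering
    intro ρ hρ
    rw [mem_sdiff_singleton_iff] at hρ
    have hcard : ρ.card ≤ 2 := ((mem_graphComplex_iff G).mp hρ.1).1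
    have hpos : 0 < ρ.card := card_pos.mpr (nonempty_iff_ne_empty.mpr hρ.2)
    interval_cases h : ρ.card
    · -- card 1
      obtain ⟨v, rfl⟩ := card_eq_one.mp h
      refine ⟨e v, ⟨hmemF.mpr ⟨heΔ v, hecard v⟩, by rw [hRpos v], by
        rw [singleton_subset_iff]; exact hev v⟩, ?_⟩
      rintro σ' ⟨hσ'F, hRσ', hvσ'⟩
      rw [hmemF] at hσ'F
      by_cases hex : ∃ u, e u = σ'
      · have heq : R σ' = {hex.choose} := by simp only [hR]; rw [dif_pos hex]
        rw [heq] at hRσ'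
        rw [singleton_subset_iff, mem_singleton] at hRσ'
        rw [← hex.choose_spec, hRσ']
      · have heq : R σ' = σ' := by simp only [hR]; rw [dif_neg hex]
        rw [heq] at hRσ'
        have := card_le_card hRσ'
        simp [hσ'F.2] at this
    · -- card 2
      refine ⟨ρ, ⟨hmemF.mpr ⟨hρ.1, h⟩, hRsub ρ, subset_rfl⟩, ?_⟩
      rintro σ' ⟨hσ'F, _, hρσ'⟩
      rw [hmemF] at hσ'F
      exact (eq_of_subset_of_card_le hρσ' (by omega)).symm

lemma partitionable_good (hiso : ∀ v : V, ∃ u : V, G.Adj v u)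
    (hP : IsPartitionable (graphComplex G) {∅}) :
    ∃ g : V → V, (∀ v, G.Adj v (g v)) ∧
      Function.Injective (fun v => ({v, g v} : Finset V)) := by
  classical
  obtain ⟨F, R, h1, h2, h3, h4⟩ := hP
  have hsingΔ : ∀ v : V, ({v} : Finset V) ∈ graphComplex G \ {∅} := by
    intro v
    rw [mem_sdiff, mem_singleton]
    exact ⟨singleton_mem_graphComplex G v, singleton_ne_empty v⟩
  choose σf hσf using fun v => (h4 {v} (hsingΔ v)).exists
  have hvσ : ∀ v, v ∈ σf v := fun v => (hσf v).2.2 (mem_singleton_self v)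
  have hRv : ∀ v, R (σf v) = {v} := by
    intro v
    have hne : R (σf v) ≠ ∅ := by
      have := h3 _ (hσf v).1 _ subset_rfl (h2 _ (hσf v).1)
      rw [mem_sdiff, mem_singleton] at this
      exact this.2
    rcases subset_singleton_iff.mp (hσf v).2.1 with h | h
    · exact absurd h hne
    · exact h
  have hσΔ : ∀ v, σf v ∈ graphComplex G := by
    intro v
    have := (h1 _ (hσf v).1).1
    rw [mem_sdiff] at this
    exact this.1
  have hcard : ∀ v, (σf v).card = 2 := by
    intro v
    have hle : (σf v).card ≤ 2 := ((mem_graphComplex_iff G).mp (hσΔ v)).1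
    have hge : 1 ≤ (σf v).card := card_pos.mpr ⟨v, hvσ v⟩
    by_contra hne2
    have h1' : (σf v).card = 1 := by omega
    obtain ⟨a, ha⟩ := card_eq_one.mp h1'
    have hva : v = a := by
      have := hvσ v; rw [ha, mem_singleton] at this; exact this
    have hσv : σf v = {v} := by rw [ha, hva]
    obtain ⟨u, hu⟩ := hiso v
    have hτ : ({v, u} : Finset V) ∈ graphComplex G \ {∅} := by
      rw [mem_sdiff, mem_singleton]
      exact ⟨pair_mem_graphComplex G hu, by
        intro h; have := card_pair hu.ne; rw [h] at this; simp at this⟩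
    have := (h1 _ (hσf v).1).2 _ hτ (by rw [hσv]; exact singleton_subset_iff.mpr (by simp))
    rw [hσv] at this
    have hc := congrArg Finset.card this
    rw [card_singleton, card_pair hu.ne] at hc
    omega
  have hg : ∀ v, ∃ u, (σf v).erase v = {u} := by
    intro v
    rw [← card_eq_one, card_erase_of_mem (hvσ v), hcard v]
  choose g hgspec using hg
  have hgmem : ∀ v, g v ∈ σf v ∧ g v ≠ v := by
    intro v
    have : g v ∈ (σf v).erase v := by rw [hgspec v]; exact mem_singleton_self _
    rw [mem_erase] at this
    exact ⟨this.2, this.1⟩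
  have hσpair : ∀ v, σf v = {v, g v} := by
    intro v
    rw [← insert_erase (hvσ v), hgspec v]
  refine ⟨g, ?_, ?_⟩
  · intro v
    exact ((mem_graphComplex_iff G).mp (hσΔ v)).2 v (hvσ v) (g v) (hgmem v).1
      (hgmem v).2.symm
  · intro v w hvw
    simp only at hvw
    have : σf v = σf w := by rw [hσpair v, hσpair w, hvw]
    have := congrArg R this
    rw [hRv v, hRv w] at this
    exact singleton_injective this

lemma good_no_tree (g : V → V) (hadj : ∀ v, G.Adj v (g v))
    (hinj : Function.Injective fun v => ({v, g v} : Finset V))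
    (c : G.ConnectedComponent) (ht : (SimpleGraph.induce c.supp G).IsTree) : False := by
  classical
  have hgmem : ∀ v, v ∈ c.supp → g v ∈ c.supp := by
    intro v hv
    rw [ConnectedComponent.mem_supp_iff] at hv ⊢
    rw [← hv]
    exact (ConnectedComponent.sound (hadj v).reachable).symm
  have hcards := ht.card_edgeFinset
  set φ : c.supp → ((SimpleGraph.induce c.supp G).edgeFinset : Finset _) := fun x =>
    ⟨s(⟨x.1, x.2⟩, ⟨g x.1, hgmem x.1 x.2⟩), by
      rw [mem_edgeFinset, mem_edgeSet]
      simpa using hadj x.1⟩ with hφ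
  have hφinj : Function.Injective φ := by
    intro a b hab
    rw [hφ] at hab
    have hval := congrArg Subtype.val hab
    simp only [Sym2.eq_iff] at hval
    rcases hval with ⟨hx, -⟩ | ⟨hx, hy⟩
    · exact Subtype.ext (congrArg Subtype.val hx)
    · have hx' : a.1 = g b.1 := congrArg Subtype.val hx
      have hy' : g a.1 = b.1 := congrArg Subtype.val hy
      have key : ({b.1, g b.1} : Finset V) = {a.1, g a.1} := by
        rw [← hx', ← hy', pair_comm]
      exact Subtype.ext (hinj key).symm
  have hle := Fintype.card_le_of_injective φ hφinj
  rw [Fintype.card_coe] at hle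
  omega


end GC

open scoped Classical in
/-- A graph with no isolated vertices is partitionable relative to `{∅}` iff no
connected component is a tree. -/
theorem graph_partitionable_iff_no_tree_component [Fintype V] [DecidableEq V]
    (G : SimpleGraph V) [DecidableRel G.Adj]
    (hiso : ∀ v : V, ∃ u : V, G.Adj v u) :
    IsPartitionable (graphComplex G) {∅} ↔
      ¬ ∃ c : G.ConnectedComponent, (SimpleGraph.induce c.supp G).IsTree := by
  classical
  constructor
  · intro hP hex
    obtain ⟨c, ht⟩ := hex
    obtain ⟨g, hadj, hinj⟩ := partitionable_good G hiso hP
    exact good_no_tree G g hadj hinj c ht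
  · intro hnt
    have h1 : ∀ c : G.ConnectedComponent, ∃ (a : V) (p : G.Walk a a),
        p.IsCycle ∧ G.connectedComponentMk a = c :=
      fun c => comp_cycle c (fun ht => hnt ⟨c, ht⟩)
    obtain ⟨g, hadj, hgg⟩ := exists_good_fun G h1
    exact good_partitionable G g hadj hgg
end

section
/- If a relative simplicial complex (Δ, Γ) is shellable (with Γ ≠ ∅), then it is partitionable; specifically, a shelling order σ_1,…,σ_m yields a partitioning in which the j-th interval is ⟨σ_j⟩ \ Λ_{j−1} = [R(σ_j), σ_j] for a unique minimal new face R(σ_j) ⊆ σ_j, where Λ_{j−1} is the complex generated by Γ together with σ_1,…,σ_{j−1}. -/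
open Finset

variable {V : Type*}

/-- The complex `Λ_{j-1}` generated by `Γ` together with the facets `σ_i`, `i < j`. -/
def shellGen [DecidableEq V] (Γ : Finset (Finset V)) {m : ℕ} (σ : Fin m → Finset V)
    (j : Fin m) : Finset (Finset V) :=
  Γ ∪ (Finset.univ.filter (fun i => i < j)).biUnion (fun i => (σ i).powerset)

/-- A shelling of the relative complex `(Δ, Γ)`: an ordering `σ 0, …, σ (m-1)` of its
facets such that each `⟨σ j⟩ ∩ Λ_{j-1}` is pure of dimension `dim (σ j) - 1`. -/
def IsShelling [DecidableEq V] (Δ Γ : Finset (Finset V)) (m : ℕ) (σ : Fin m → Finset V) :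
    Prop :=
  Function.Injective σ ∧
  (∀ j, IsFacet Δ Γ (σ j)) ∧
  (∀ τ, IsFacet Δ Γ τ → ∃ j, σ j = τ) ∧
  (∀ j : Fin m, ∀ τ ∈ (σ j).powerset ∩ shellGen Γ σ j,
    (∀ ρ ∈ (σ j).powerset ∩ shellGen Γ σ j, τ ⊆ ρ → τ = ρ) → τ.card + 1 = (σ j).card)

/-- The relative complex `(Δ, Γ)` is shellable. -/
def IsShellable [DecidableEq V] (Δ Γ : Finset (Finset V)) : Prop :=
  ∃ (m : ℕ) (σ : Fin m → Finset V), IsShelling Δ Γ m σ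


lemma shellGen_down [DecidableEq V] {Γ : Finset (Finset V)} (hΓ : IsComplex Γ)
    {m : ℕ} {σ : Fin m → Finset V} {j : Fin m} {τ ρ : Finset V}
    (hτ : τ ∈ shellGen Γ σ j) (hρ : ρ ⊆ τ) : ρ ∈ shellGen Γ σ j := by
  unfold shellGen at hτ ⊢
  rcases Finset.mem_union.1 hτ with h | h
  · exact Finset.mem_union_left _ (hΓ τ h ρ hρ)
  · rcases Finset.mem_biUnion.1 h with ⟨i, hi, hτi⟩
    exact Finset.mem_union_right _ (Finset.mem_biUnion.2
      ⟨i, hi, Finset.mem_powerset.2 (hρ.trans (Finset.mem_powerset.1 hτi))⟩)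

/-- A shellable relative complex is partitionable: a shelling yields a partitioning in
which the `j`-th interval is `⟨σ j⟩ \ Λ_{j-1} = [R j, σ j]` for a unique minimal new
face `R j ⊆ σ j`. -/
theorem shellable_implies_partitionable [DecidableEq V] (Δ Γ : Finset (Finset V))
    (hΔ : IsComplex Δ) (hΓ : IsComplex Γ) (hΓΔ : Γ ⊆ Δ) (hΓne : Γ.Nonempty)
    (m : ℕ) (σ : Fin m → Finset V) (hshell : IsShelling Δ Γ m σ) :
    (∃ R : Fin m → Finset V,
      (∀ j, R j ⊆ σ j) ∧
      (∀ j, (σ j).powerset \ shellGen Γ σ j =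
        (σ j).powerset.filter (fun ρ => R j ⊆ ρ ∧ ρ ⊆ σ j))) ∧
    IsPartitionable Δ Γ := by
  classical
  obtain ⟨hinj, hfac, hsurj, hmax⟩ := hshell
  have hempty : (∅ : Finset V) ∈ Γ := by
    obtain ⟨s, hs⟩ := hΓne; exact hΓ s hs ∅ (empty_subset s)
  set R : Fin m → Finset V := fun j => (σ j).filter (fun x => σ j \ {x} ∈ shellGen Γ σ j)
    with hRdef
  have hRsub : ∀ j, R j ⊆ σ j := fun j => filter_subset _ _
  -- Key equivalence: for ρ ⊆ σ j, ρ is new iff R j ⊆ ρ.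
  have key : ∀ (j : Fin m) (ρ : Finset V), ρ ⊆ σ j →
      (ρ ∉ shellGen Γ σ j ↔ R j ⊆ ρ) := by
    intro j ρ hρ
    constructor
    · intro hnew x hx
      rw [hRdef] at hx
      simp only [mem_filter] at hx
      by_contra hxρ
      refine hnew (shellGen_down hΓ hx.2 (fun y hy => mem_sdiff.2 ⟨hρ hy, ?_⟩))
      simp only [mem_singleton]
      rintro rfl; exact hxρ hy
    · intro hRρ hold
      have hne : (((σ j).powerset ∩ shellGen Γ σ j).filter (fun τ => ρ ⊆ τ)).Nonempty :=
        ⟨ρ, by simp [mem_filter, mem_inter, mem_powerset, hρ, hold]⟩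
      obtain ⟨τ, hτ, hτmax⟩ : ∃ τ ∈ ((σ j).powerset ∩ shellGen Γ σ j).filter (fun τ => ρ ⊆ τ),
          ∀ x ∈ ((σ j).powerset ∩ shellGen Γ σ j).filter (fun τ => ρ ⊆ τ), ¬ τ < x := by
        obtain ⟨τ, hτ⟩ := Finset.exists_maximal hne
        exact ⟨τ, hτ.1, fun x hx hlt => lt_irrefl _ (hlt.trans_le (hτ.2 hx hlt.le))⟩
      simp only [mem_filter, mem_inter, mem_powerset] at hτ
      have hτm : ∀ ρ' ∈ (σ j).powerset ∩ shellGen Γ σ j, τ ⊆ ρ' → τ = ρ' := by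
        intro ρ' hρ' hsub
        by_contra hne'
        exact hτmax ρ' (mem_filter.2 ⟨hρ', hτ.2.trans hsub⟩) (lt_of_le_of_ne hsub hne')
      have hcard := hmax j τ (mem_inter.2 ⟨mem_powerset.2 hτ.1.1, hτ.1.2⟩) hτm
      have hone : (σ j \ τ).card = 1 := by
        rw [card_sdiff_of_subset hτ.1.1]; omega
      obtain ⟨x, hx⟩ := card_eq_one.1 hone
      have hτeq : τ = σ j \ {x} := by
        rw [← hx, Finset.sdiff_sdiff_eq_self hτ.1.1]
      have hxσ : x ∈ σ j := by
        have : x ∈ σ j \ τ := hx ▸ mem_singleton_self x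
        exact (mem_sdiff.1 this).1
      have hxR : x ∈ R j := by
        rw [hRdef]; simp only [mem_filter]
        exact ⟨hxσ, hτeq ▸ hτ.1.2⟩
      have : x ∈ τ := hτ.2 (hRρ hxR)
      rw [hτeq] at this
      simp at this
  -- The interval description of the new faces.
  have hint : ∀ j, (σ j).powerset \ shellGen Γ σ j =
      (σ j).powerset.filter (fun ρ => R j ⊆ ρ ∧ ρ ⊆ σ j) := by
    intro j
    ext ρ
    simp only [mem_sdiff, mem_filter, mem_powerset]
    constructor
    · rintro ⟨h1, h2⟩; exact ⟨h1, (key j ρ h1).1 h2, h1⟩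
    · rintro ⟨h1, h2, -⟩; exact ⟨h1, (key j ρ h1).2 h2⟩
  refine ⟨⟨R, hRsub, hint⟩, ?_⟩
  -- Partitionability
  set F : Finset (Finset V) := Finset.univ.image σ with hFdef
  set R' : Finset V → Finset V := fun τ => if h : ∃ j, σ j = τ then R h.choose else ∅
    with hR'def
  have hR'σ : ∀ j, R' (σ j) = R j := by
    intro j
    have h : ∃ k, σ k = σ j := ⟨j, rfl⟩
    rw [hR'def]
    simp only [dif_pos h]
    congr 1
    exact hinj h.choose_spec
  have hmemF : ∀ j, σ j ∈ F := fun j => mem_image.2 ⟨j, mem_univ j, rfl⟩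
  -- new faces are in Δ \ Γ
  have hnewΔΓ : ∀ (j : Fin m) (ρ : Finset V), R j ⊆ ρ → ρ ⊆ σ j → ρ ∈ Δ \ Γ := by
    intro j ρ h1 h2
    have hσΔ : σ j ∈ Δ := (mem_sdiff.1 (hfac j).1).1
    have hnew : ρ ∉ shellGen Γ σ j := (key j ρ h2).2 h1
    refine mem_sdiff.2 ⟨hΔ (σ j) hσΔ ρ h2, fun hρΓ => hnew ?_⟩
    exact Finset.mem_union_left _ hρΓ
  refine ⟨F, R', ?_, ?_, ?_, ?_⟩
  · intro τ hτ
    obtain ⟨j, -, rfl⟩ := mem_image.1 hτ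
    exact hfac j
  · intro τ hτ
    obtain ⟨j, -, rfl⟩ := mem_image.1 hτ
    rw [hR'σ]; exact hRsub j
  · intro τ hτ ρ h1 h2
    obtain ⟨j, -, rfl⟩ := mem_image.1 hτ
    rw [hR'σ] at h1
    exact hnewΔΓ j ρ h1 h2
  · intro ρ hρ
    have hρΔ := (mem_sdiff.1 hρ).1
    have hρΓ := (mem_sdiff.1 hρ).2
    -- find a facet containing ρ
    have hne : ((Δ \ Γ).filter (fun τ => ρ ⊆ τ)).Nonempty := ⟨ρ, by simp [hρ]⟩
    obtain ⟨τ, hτ, hτmax⟩ : ∃ τ ∈ (Δ \ Γ).filter (fun τ => ρ ⊆ τ),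
        ∀ x ∈ (Δ \ Γ).filter (fun τ => ρ ⊆ τ), ¬ τ < x := by
      obtain ⟨τ, hτ⟩ := Finset.exists_maximal hne
      exact ⟨τ, hτ.1, fun x hx hlt => lt_irrefl _ (hlt.trans_le (hτ.2 hx hlt.le))⟩
    simp only [mem_filter] at hτ
    have hτfac : IsFacet Δ Γ τ := by
      refine ⟨hτ.1, fun τ' hτ' hsub => ?_⟩
      by_contra hne'
      exact hτmax τ' (mem_filter.2 ⟨hτ', hτ.2.trans hsub⟩) (lt_of_le_of_ne hsub hne')
    obtain ⟨j₀, hj₀⟩ := hsurj τ hτfac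
    -- minimal j with ρ ⊆ σ j
    set T : Finset (Fin m) := Finset.univ.filter (fun j => ρ ⊆ σ j) with hTdef
    have hTne : T.Nonempty := ⟨j₀, by simp [hTdef, hj₀ ▸ hτ.2]⟩
    set j := T.min' hTne with hjdef
    have hjT : j ∈ T := T.min'_mem hTne
    have hρσj : ρ ⊆ σ j := by
      have := hjT; rw [hTdef] at this; simpa using this
    have hρnew : ρ ∉ shellGen Γ σ j := by
      intro hmem
      unfold shellGen at hmem
      rcases Finset.mem_union.1 hmem with h | h
      · exact hρΓ h
      · obtain ⟨i, hi, hρi⟩ := Finset.mem_biUnion.1 h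
        simp only [mem_filter, mem_univ, true_and] at hi
        have hiT : i ∈ T := by simp [hTdef, Finset.mem_powerset.1 hρi]
        exact absurd (T.min'_le i hiT) (not_le.2 hi)
    have hRρ : R j ⊆ ρ := (key j ρ hρσj).1 hρnew
    refine ⟨σ j, ⟨hmemF j, by rw [hR'σ]; exact hRρ, hρσj⟩, ?_⟩
    rintro τ' ⟨hτ'F, hR'τ', hρτ'⟩
    obtain ⟨k, -, rfl⟩ := mem_image.1 hτ'F
    rw [hR'σ] at hR'τ'
    congr 1
    rcases lt_trichotomy k j with h | h | h
    · exfalso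
      have : ρ ∈ shellGen Γ σ j := by
        unfold shellGen
        exact Finset.mem_union_right _ (Finset.mem_biUnion.2
          ⟨k, by simp [h], Finset.mem_powerset.2 hρτ'⟩)
      exact hρnew this
    · exact h
    · exfalso
      have hρnewk : ρ ∉ shellGen Γ σ k := (key k ρ hρτ').2 hR'τ'
      refine hρnewk ?_
      unfold shellGen
      exact Finset.mem_union_right _ (Finset.mem_biUnion.2
        ⟨j, by simp [h], Finset.mem_powerset.2 hρσj⟩)
end
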